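/- arXiv:1502.02569 — 2 statements merged into one kernel-verified Lean document; each statement's English description precedes it below -/
import Mathlib

section
/- For all integers w, t, I, and α with α ≥ 0, t ≥ 0, w + α ≥ 0, and I ≥ 1, one has Q(w,t,I,α) = 0. -/
/-!
Write `K = I - w - α` and `N = w + α`. Expanding `C(t+r, K+r)` by Vandermonde and summing an
alternating partial sum turns the first sum of `Q` into
`(-1)^w ∑_{r ≤ w} (-1)^r C(I-1,r) C(t+r,K+r)`; upper negation turns the second into
`(-1)^w ∑_{j < N} (-1)^j C(-t,N-1-2j) C(t,K+j)`; the third sum supplies the terms `w < r < N`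
missing from the first (for `α = 0` it is a partial Vandermonde sum, equal to the `r = w` term).
So `Q = 0` is the identity
`∑_{r<N} (-1)^r C(K+N-1,r) C(t+r,K+r) = ∑_{j<N} (-1)^j C(-t,N-1-2j) C(t,K+j)`, valid for all
integers `K`, `t`: by Pascal's rule both sides satisfy
`X(N+2,K,t) = X(N+1,K,t) - X(N,K+1,t+1) + (-1)^(N+1) C(K+N+1,N+1) C(t+N+1,K+N+1)`,
and they agree for `N = 0, 1`.
-/

/-- The generalized binomial coefficient `C(a,b)` for integers `a`, `b`:
`C(a,b) = 0` if `b < 0`, and `C(a,b) = a(a-1)⋯(a-b+1)/b!` if `b ≥ 0`. -/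
noncomputable def binom (a b : ℤ) : ℤ := if b < 0 then 0 else Ring.choose a b.toNat

/-- The integer `Q(w,t,I,α)` from Definition 3.1 of the paper (intended for `0 ≤ α`). -/
noncomputable def Q (w t I α : ℤ) : ℤ :=
  if α = 0 then
    -(∑ᶠ i : ℤ, binom (I - 1) (w - i) * binom (i + I - w - 2) i * binom t (I - i))
    + (∑ᶠ i ∈ Set.Iic w,
        ((i + w + 1).negOnePow : ℤ) * binom (2 * i - w - 2 + t) (2 * i - w - 1) * binom t (I - i))
    + (∑ᶠ i ∈ Set.Iic w,
        ((i + w).negOnePow : ℤ) * binom (t + i - 1) i * binom t (I - i))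
  else
    -(∑ᶠ i : ℤ, binom (I - 1) (w - i) * binom (i + I - w - 2) i * binom t (I - i - α))
    + (∑ᶠ i ∈ Set.Iic w,
        ((i + w + 1 + α).negOnePow : ℤ) * binom (2 * i - w - 2 + t + α) (2 * i - w - 1 + α) *
          binom t (I - i - α))
    + (∑ i ∈ Finset.Icc (1 : ℤ) (α - 1),
        ((i + 1).negOnePow : ℤ) * binom (I - 1) (w + i) * binom (t + w + i) (I - α + i))

open Finset

lemma binom_of_neg {b : ℤ} (hb : b < 0) (a : ℤ) : binom a b = 0 := if_pos hb

@[simp] lemma binom_natCast (a : ℤ) (n : ℕ) : binom a n = Ring.choose a n := by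
  simp [binom]

@[simp] lemma binom_zero_right (a : ℤ) : binom a 0 = 1 := by
  simpa using binom_natCast a 0

lemma binom_eq_zero_of_lt {a b : ℤ} (ha : 0 ≤ a) (hab : a < b) : binom a b = 0 := by
  lift a to ℕ using ha
  lift b to ℕ using by omega
  simp [Ring.choose_natCast, Nat.choose_eq_zero_of_lt (by omega : a < b)]

lemma binom_add_one (a b : ℤ) : binom (a + 1) b = binom a (b - 1) + binom a b := by
  rcases lt_or_ge b 0 with hb | hb
  · simp [binom_of_neg hb, binom_of_neg (by omega : b - 1 < 0)]
  lift b to ℕ using hb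
  cases b with
  | zero => simp [binom_of_neg]
  | succ n =>
    rw [show ((n + 1 : ℕ) : ℤ) - 1 = n by push_cast; ring]
    simp only [binom_natCast, Ring.choose_succ_succ]

lemma binom_eq_negOnePow_mul (a b : ℤ) : binom a b = b.negOnePow * binom (b - 1 - a) b := by
  rcases lt_or_ge b 0 with hb | hb
  · simp [binom_of_neg hb]
  lift b to ℕ using hb
  rw [binom_natCast, binom_natCast, ← neg_neg a, Ring.choose_neg (-a) b, Units.smul_def,
    zsmul_eq_mul, neg_neg]
  congr 2
  ring

lemma binom_mul_binom (a b k : ℤ) :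
    binom a b * binom b k = binom a k * binom (a - k) (b - k) := by
  rcases lt_or_ge k 0 with hk | hk
  · simp [binom_of_neg hk]
  rcases lt_or_ge b k with hbk | hbk
  · rw [binom_of_neg (by omega : b - k < 0)]
    rcases lt_or_ge b 0 with hb | hb
    · simp [binom_of_neg hb]
    · simp [binom_eq_zero_of_lt hb hbk]
  lift k to ℕ using hk
  lift b to ℕ using by omega
  have := Ring.choose_smul_choose a (Nat.cast_le.1 hbk)
  rw [show (b : ℤ) - k = ((b - k : ℕ) : ℤ) by omega]
  simp only [binom_natCast, Ring.choose_natCast, nsmul_eq_mul] at this ⊢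
  rw [← this]
  ring

lemma binom_add_natCast_eq_sum (a b : ℤ) (n : ℕ) :
    binom (a + n) (b + n) = ∑ j ∈ range (n + 1), (n.choose j : ℤ) * binom a (b + j) := by
  induction n generalizing b with
  | zero => simp
  | succ n ih =>
    have pascal := binom_add_one (a + n) (b + n + 1)
    rw [add_sub_cancel_right, ih, show b + n + 1 = (b + 1) + n by ring, ih] at pascal
    rw [sum_choose_succ_mul (fun i _ ↦ binom a (b + i)) n]
    push_cast
    linear_combination (norm := ring_nf) pascal

lemma neg_one_pow_mul_neg_one_pow_self (n : ℕ) : (-1 : ℤ) ^ n * (-1) ^ n = 1 := by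
  rw [← mul_pow, neg_one_mul, neg_neg, one_pow]

lemma sum_range_neg_one_pow_mul_binom_sub (a : ℤ) (j n : ℕ) :
    ∑ r ∈ range (n + 1), (-1) ^ r * binom a (r - j) = (-1) ^ n * binom (a - 1) (n - j) := by
  induction n with
  | zero =>
    rcases j with _ | j
    · simp
    · rw [sum_range_one, binom_of_neg (by omega), binom_of_neg (by omega)]
  | succ n ih =>
    have pascal := binom_add_one (a - 1) (n + 1 - j)
    rw [sub_add_cancel, show (n : ℤ) + 1 - j - 1 = n - j by ring] at pascal
    rw [sum_range_succ, ih]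
    push_cast
    rw [pascal]
    ring

lemma sum_range_neg_one_pow_mul_binom_mul_binom (c : ℤ) (j n : ℕ) :
    ∑ r ∈ range (n + 1), (-1) ^ r * binom c r * binom r j =
      (-1) ^ n * binom c j * binom (c - 1 - j) (n - j) := by
  simp_rw [mul_assoc, binom_mul_binom c, mul_left_comm _ (binom c j)]
  rw [← mul_sum, sum_range_neg_one_pow_mul_binom_sub, sub_right_comm]

lemma sum_range_binom_mul_binom_mul_binom (c t K : ℤ) (n : ℕ) :
    ∑ j ∈ range (n + 1), binom c j * binom (c - 1 - j) (n - j) * binom t (K + j) =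
      (-1) ^ n * ∑ r ∈ range (n + 1), (-1) ^ r * binom c r * binom (t + r) (K + r) := by
  have vandermonde : ∀ r ∈ range (n + 1), (-1) ^ r * binom c r * binom (t + r) (K + r) =
      ∑ j ∈ range (n + 1), (-1) ^ r * binom c r * binom r j * binom t (K + j) := by
    intro r hr
    rw [binom_add_natCast_eq_sum, mul_sum,
      ← eventually_constant_sum (N := r + 1) _ (n := n + 1) (by simpa using hr)]
    · refine sum_congr rfl fun j _ ↦ ?_
      simp [Ring.choose_natCast, mul_assoc]
    · intro j hj
      simp [Nat.choose_eq_zero_of_lt (by omega : r < j)]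
  rw [sum_congr rfl vandermonde, sum_comm, mul_sum]
  refine sum_congr rfl fun j _ ↦ ?_
  rw [← sum_mul, sum_range_neg_one_pow_mul_binom_mul_binom]
  simp only [← mul_assoc, neg_one_pow_mul_neg_one_pow_self, one_mul]

lemma sum_range_binom_neg_mul_binom (t a : ℤ) (n : ℕ) :
    ∑ i ∈ range (n + 1), binom (-t) i * binom t (a - i) =
      (-1) ^ n * binom (a - 1) n * binom (t + n) a := by
  induction n with
  | zero => simp
  | succ n ih =>
    have h1 := binom_add_one (t + n) a
    have h2 := binom_add_one (a - 1) (n + 1)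
    have h3 := binom_mul_binom (t + n) (a - 1) (n + 1)
    have h4 := binom_mul_binom (t + n) a (n + 1)
    have h5 := binom_add_one (t - 1) (a - n - 1)
    have h6 := binom_eq_negOnePow_mul (-t) ((n + 1 : ℕ) : ℤ)
    rw [Int.coe_negOnePow_natCast] at h6
    rw [sum_range_succ, ih]
    push_cast at h6 ⊢
    linear_combination (norm := ring_nf) (-1) ^ n * (binom (a - 1) (n + 1) * h1 + h3
      - binom (t + n) a * h2 + h4 - binom (t + n) (n + 1) * h5) + binom t (a - n - 1) * h6

noncomputable def shiftedSum (N : ℕ) (K t : ℤ) : ℤ :=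
  ∑ r ∈ range N, (-1) ^ r * binom (K + N - 1) r * binom (t + r) (K + r)

noncomputable def negatedSum (N : ℕ) (K t : ℤ) : ℤ :=
  ∑ j ∈ range N, (-1) ^ j * binom (-t) (N - 1 - 2 * j) * binom t (K + j)

lemma shiftedSum_add_two (N : ℕ) (K t : ℤ) :
    shiftedSum (N + 2) K t = shiftedSum (N + 1) K t - shiftedSum N (K + 1) (t + 1) +
      (-1) ^ (N + 1) * binom (K + N + 1) (N + 1) * binom (t + N + 1) (K + N + 1) := by
  have pascal : shiftedSum (N + 2) K t =
      ∑ r ∈ range (N + 2), (-1) ^ r * binom (K + N) r * binom (t + r) (K + r) +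
      ∑ r ∈ range (N + 2), (-1) ^ r * binom (K + N) (r - 1) * binom (t + r) (K + r) := by
    rw [shiftedSum, ← sum_add_distrib]
    refine sum_congr rfl fun r _ ↦ ?_
    rw [show K + ↑(N + 2) - 1 = K + N + 1 by push_cast; ring, binom_add_one]
    ring
  have top : ∑ r ∈ range (N + 2), (-1) ^ r * binom (K + N) r * binom (t + r) (K + r) =
      shiftedSum (N + 1) K t +
        (-1) ^ (N + 1) * binom (K + N) (N + 1) * binom (t + N + 1) (K + N + 1) := by
    rw [sum_range_succ, shiftedSum]
    push_cast
    ring_nf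
  have shifted :
      ∑ r ∈ range (N + 2), (-1) ^ r * binom (K + N) (r - 1) * binom (t + r) (K + r) =
        -shiftedSum N (K + 1) (t + 1) -
          (-1) ^ N * binom (K + N) N * binom (t + N + 1) (K + N + 1) := by
    have reindex : ∑ r ∈ range N, (-1) ^ (r + 1) * binom (K + N) (↑(r + 1) - 1) *
        binom (t + ↑(r + 1)) (K + ↑(r + 1)) = -shiftedSum N (K + 1) (t + 1) := by
      rw [shiftedSum, ← sum_neg_distrib]
      refine sum_congr rfl fun r _ ↦ ?_
      push_cast
      ring_nf
    rw [sum_range_succ', sum_range_succ, reindex,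
      binom_of_neg (show ((0 : ℕ) : ℤ) - 1 < 0 by simp)]
    push_cast
    ring_nf
  linear_combination (norm := ring_nf) pascal + top + shifted +
    (-1) ^ N * binom (t + N + 1) (K + N + 1) * binom_add_one (K + N) (N + 1)

lemma negatedSum_eq_sum_range {N M : ℕ} (h : N ≤ M) (K t : ℤ) :
    negatedSum N K t = ∑ j ∈ range M, (-1) ^ j * binom (-t) (N - 1 - 2 * j) * binom t (K + j) :=
  (eventually_constant_sum (fun j hj ↦ by simp (disch := omega) only [binom_of_neg]; ring) h).symm

lemma negatedSum_shift (N : ℕ) (K t : ℤ) :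
    negatedSum N (K + 1) (t + 1) =
      ∑ j ∈ range (N + 2), (-1) ^ j * binom (-t - 1) (N - 1 - 2 * j) * binom t (K + j) -
      ∑ j ∈ range (N + 2), (-1) ^ j * binom (-t - 1) (N + 1 - 2 * j) * binom t (K + j) +
      binom (-t - 1) (N + 1) * binom t K := by
  have pascal : negatedSum N (K + 1) (t + 1) =
      ∑ j ∈ range (N + 1), (-1) ^ j * binom (-t - 1) (N - 1 - 2 * j) * binom t (K + j) +
      ∑ j ∈ range (N + 1), (-1) ^ j * binom (-t - 1) (N - 1 - 2 * j) * binom t (K + j + 1) := by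
    rw [negatedSum_eq_sum_range (by omega : N ≤ N + 1), ← sum_add_distrib]
    refine sum_congr rfl fun j _ ↦ ?_
    rw [binom_add_one t]
    ring_nf
  have low : ∑ j ∈ range (N + 2), (-1) ^ j * binom (-t - 1) (N - 1 - 2 * j) * binom t (K + j) =
      ∑ j ∈ range (N + 1), (-1) ^ j * binom (-t - 1) (N - 1 - 2 * j) * binom t (K + j) := by
    rw [sum_range_succ _ (N + 1)]
    simp (disch := omega) only [binom_of_neg]
    ring
  have high :
      ∑ j ∈ range (N + 2), (-1) ^ j * binom (-t - 1) (N + 1 - 2 * j) * binom t (K + j) +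
      ∑ j ∈ range (N + 1), (-1) ^ j * binom (-t - 1) (N - 1 - 2 * j) * binom t (K + j + 1) =
      binom (-t - 1) (N + 1) * binom t K := by
    rw [sum_range_succ' _ (N + 1), add_right_comm, ← sum_add_distrib, sum_eq_zero, zero_add]
    · simp
    · intro j _
      push_cast
      ring_nf
  linear_combination pascal - low + high

lemma negatedSum_add_two (N : ℕ) (K t : ℤ) :
    negatedSum (N + 2) K t = negatedSum (N + 1) K t - negatedSum N (K + 1) (t + 1) +
      (-1) ^ (N + 1) * binom (K + N + 1) (N + 1) * binom (t + N + 1) (K + N + 1) := by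
  set P : ℤ → ℤ := fun m ↦
    ∑ j ∈ range (N + 2), (-1) ^ j * binom (-t - 1) (m - 2 * j) * binom t (K + j) with hP
  have pascal (b : ℤ) : binom (-t) b = binom (-t - 1) (b - 1) + binom (-t - 1) b := by
    simpa using binom_add_one (-t - 1) b
  have h₁ : negatedSum (N + 2) K t = P N + P (N + 1) := by
    rw [negatedSum, hP, ← sum_add_distrib]
    refine sum_congr rfl fun j _ ↦ ?_
    rw [pascal]
    push_cast
    ring_nf
  have h₂ : negatedSum (N + 1) K t = P (N - 1) + P N := by
    rw [negatedSum_eq_sum_range (by omega : N + 1 ≤ N + 2), hP, ← sum_add_distrib]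
    refine sum_congr rfl fun j _ ↦ ?_
    rw [pascal]
    push_cast
    ring_nf
  have h₃ : negatedSum N (K + 1) (t + 1) =
      P (N - 1) - P (N + 1) + binom (-t - 1) (N + 1) * binom t K :=
    negatedSum_shift N K t
  have reflect := binom_eq_negOnePow_mul (-t - 1) ((N + 1 : ℕ) : ℤ)
  rw [Int.coe_negOnePow_natCast] at reflect
  push_cast at reflect
  linear_combination (norm := ring_nf) h₁ - h₂ + h₃ + binom t K * reflect +
    (-1) ^ N * binom_mul_binom (t + N + 1) (K + N + 1) (N + 1)

theorem shiftedSum_eq_negatedSum (N : ℕ) (K t : ℤ) : shiftedSum N K t = negatedSum N K t := by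
  induction N using Nat.twoStepInduction generalizing K t with
  | zero => simp [shiftedSum, negatedSum]
  | one => simp [shiftedSum, negatedSum]
  | more N ih₀ ih₁ => rw [shiftedSum_add_two, negatedSum_add_two, ih₀, ih₁]

lemma nonneg_of_binom_ne_zero {a b : ℤ} (h : binom a b ≠ 0) : 0 ≤ b := by
  contrapose! h
  exact binom_of_neg h a

lemma negOnePow_mul_negOnePow (a b : ℤ) :
    (a.negOnePow : ℤ) * b.negOnePow = (a + b).negOnePow := by
  simp [Int.negOnePow_add]

lemma negOnePow_eq_of_two_dvd_sub {a b : ℤ} (h : 2 ∣ a - b) : (a.negOnePow : ℤ) = b.negOnePow :=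
  congrArg _ ((Int.negOnePow_eq_iff a b).2 (even_iff_two_dvd.2 h))

lemma finsum_eq_sum_range {f : ℤ → ℤ} {g : ℕ → ℤ} (hg : Function.Injective g) {n : ℕ}
    (hf : ∀ i, f i ≠ 0 → ∃ j < n, g j = i) : ∑ᶠ i, f i = ∑ j ∈ range n, f (g j) := by
  classical
  rw [finsum_eq_sum_of_support_subset f (s := (range n).image g), sum_image hg.injOn]
  intro i hi
  simpa using hf i hi

lemma finsum_mem_Iic_eq_sum_range {f : ℤ → ℤ} {g : ℕ → ℤ} (hg : Function.Injective g) {w : ℤ}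
    {n : ℕ} (hgw : ∀ j < n, g j ≤ w) (hf : ∀ i ≤ w, f i ≠ 0 → ∃ j < n, g j = i) :
    ∑ᶠ i ∈ Set.Iic w, f i = ∑ j ∈ range n, f (g j) := by
  rw [finsum_mem_def, finsum_eq_sum_range hg]
  · exact sum_congr rfl fun j hj ↦
      Set.indicator_of_mem (Set.mem_Iic.2 (hgw j (mem_range.1 hj))) f
  · intro i hi
    have hiw : i ≤ w := by
      by_contra h
      exact hi (Set.indicator_of_notMem (s := Set.Iic w) (by simpa using h) f)
    exact hf i hiw (by rwa [Set.indicator_of_mem (Set.mem_Iic.2 hiw)] at hi)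

lemma sub_natCast_injective (w : ℤ) : Function.Injective fun j : ℕ ↦ w - j :=
  fun a b h ↦ by simpa using h

lemma Q_sum₁_eq (w t I α : ℤ) :
    ∑ᶠ i : ℤ, binom (I - 1) (w - i) * binom (i + I - w - 2) i * binom t (I - i - α) =
      w.negOnePow * ∑ r ∈ range (w + 1).toNat,
        (-1) ^ r * binom (I - 1) r * binom (t + r) (I - w - α + r) := by
  rw [finsum_eq_sum_range (sub_natCast_injective w) (n := (w + 1).toNat)]
  swap
  · intro i hi
    have h₁ := nonneg_of_binom_ne_zero (left_ne_zero_of_mul (left_ne_zero_of_mul hi))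
    have h₂ := nonneg_of_binom_ne_zero (right_ne_zero_of_mul (left_ne_zero_of_mul hi))
    exact ⟨(w - i).toNat, by omega, by omega⟩
  rcases lt_or_ge w 0 with hw | hw
  · simp [show (w + 1).toNat = 0 by omega]
  lift w to ℕ using hw
  rw [show ((w : ℤ) + 1).toNat = w + 1 by omega, Int.coe_negOnePow_natCast,
    ← sum_range_binom_mul_binom_mul_binom]
  refine sum_congr rfl fun j _ ↦ ?_
  ring_nf

lemma Q_sum₂_eq (w t I α : ℤ) (N : ℕ) (hN : w + α = N) :
    ∑ᶠ i ∈ Set.Iic w, ((i + w + 1 + α).negOnePow : ℤ) *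
        binom (2 * i - w - 2 + t + α) (2 * i - w - 1 + α) * binom t (I - i - α) =
      w.negOnePow * negatedSum N (I - w - α) t := by
  rw [finsum_mem_Iic_eq_sum_range (sub_natCast_injective w) (n := N) (by simp), negatedSum,
    mul_sum]
  · refine sum_congr rfl fun j _ ↦ ?_
    have sign : ((w - j + w + 1 + α).negOnePow : ℤ) * (N - 1 - 2 * j : ℤ).negOnePow =
        w.negOnePow * (-1) ^ j := by
      rw [← Int.coe_negOnePow_natCast, negOnePow_mul_negOnePow, negOnePow_mul_negOnePow]
      exact negOnePow_eq_of_two_dvd_sub (by omega)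
    rw [binom_eq_negOnePow_mul (2 * (w - j) - w - 2 + t + α),
      show 2 * (w - j) - w - 1 + α = N - 1 - 2 * j by omega,
      show (N : ℤ) - 1 - 2 * j - 1 - (2 * (w - j) - w - 2 + t + α) = -t by omega,
      show I - (w - j) - α = I - w - α + j by ring]
    linear_combination (binom (-t) (N - 1 - 2 * j) * binom t (I - w - α + j)) * sign
  · intro i _ hi
    have := nonneg_of_binom_ne_zero (right_ne_zero_of_mul (left_ne_zero_of_mul hi))
    exact ⟨(w - i).toNat, by omega, by omega⟩

lemma Q_sum₃_eq (w t I α : ℤ) (N : ℕ) (hN : w + α = N) :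
    ∑ i ∈ Icc 1 (α - 1), ((i + 1).negOnePow : ℤ) * binom (I - 1) (w + i) *
        binom (t + w + i) (I - α + i) =
      -(w.negOnePow * ∑ r ∈ Ico (w + 1).toNat N,
        (-1) ^ r * binom (I - 1) r * binom (t + r) (I - w - α + r)) := by
  rw [mul_sum, ← sum_neg_distrib]
  have value (i : ℤ) (hi : 0 ≤ w + i) : ((i + 1).negOnePow : ℤ) * binom (I - 1) (w + i) *
      binom (t + w + i) (I - α + i) = -(w.negOnePow * ((-1) ^ (w + i).toNat *
        binom (I - 1) (w + i).toNat * binom (t + (w + i).toNat) (I - w - α + (w + i).toNat))) := by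
    have sign : ((i + 1).negOnePow : ℤ) = -(w.negOnePow * (w + i).negOnePow) := by
      rw [negOnePow_mul_negOnePow, Int.negOnePow_succ, Units.val_neg,
        negOnePow_eq_of_two_dvd_sub (b := w + (w + i)) (by omega)]
    rw [← Int.coe_negOnePow_natCast, Int.toNat_of_nonneg hi, sign,
      show t + w + i = t + (w + i) by ring, show I - α + i = I - w - α + (w + i) by ring]
    ring
  have support {i : ℤ} (h : ((i + 1).negOnePow : ℤ) * binom (I - 1) (w + i) *
      binom (t + w + i) (I - α + i) ≠ 0) : 0 ≤ w + i :=
    nonneg_of_binom_ne_zero (right_ne_zero_of_mul (left_ne_zero_of_mul h))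
  refine sum_bij_ne_zero (fun i _ _ ↦ (w + i).toNat) ?_ ?_ ?_ ?_
  · intro i hi hne
    have := support hne
    simp only [mem_Icc, mem_Ico] at hi ⊢
    omega
  · intro i _ hne i' _ hne' h
    have := support hne
    have := support hne'
    omega
  · intro r hr hne
    simp only [mem_Icc, mem_Ico] at hr ⊢
    refine ⟨r - w, by omega, ?_, by omega⟩
    rwa [value _ (by omega), show (w + (r - w)).toNat = r by omega]
  · intro i _ hne
    exact value i (support hne)

lemma Q_sum₃_eq_of_alpha_eq_zero (N : ℕ) (t I : ℤ) :
    ∑ᶠ i ∈ Set.Iic (N : ℤ), ((i + N).negOnePow : ℤ) * binom (t + i - 1) i * binom t (I - i) =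
      binom (I - 1) N * binom (t + N) I := by
  rw [finsum_mem_Iic_eq_sum_range Nat.cast_injective (n := N + 1) (fun j hj ↦ by omega)]
  · have term (j : ℕ) : (((j : ℤ) + N).negOnePow : ℤ) * binom (t + j - 1) j * binom t (I - j) =
        (-1) ^ N * (binom (-t) j * binom t (I - j)) := by
      have sign : (((j : ℤ) + N).negOnePow : ℤ) * (j : ℤ).negOnePow = (-1) ^ N := by
        rw [negOnePow_mul_negOnePow, ← Int.coe_negOnePow_natCast]
        exact negOnePow_eq_of_two_dvd_sub (by omega)
      rw [binom_eq_negOnePow_mul (t + j - 1), show (j : ℤ) - 1 - (t + j - 1) = -t by ring]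
      linear_combination (binom (-t) j * binom t (I - j)) * sign
    rw [sum_congr rfl fun j _ ↦ term j, ← mul_sum, sum_range_binom_neg_mul_binom, ← mul_assoc,
      ← mul_assoc, neg_one_pow_mul_neg_one_pow_self, one_mul]
  · intro i _ hi
    have := nonneg_of_binom_ne_zero (right_ne_zero_of_mul (left_ne_zero_of_mul hi))
    exact ⟨i.toNat, by omega, by omega⟩

theorem Q_eq_zero_general (w t I α : ℤ) (hα : 0 ≤ α) (hwα : 0 ≤ w + α) :
    Q w t I α = 0 := by
  obtain ⟨N, hN⟩ : ∃ N : ℕ, w + α = N := ⟨(w + α).toNat, (Int.toNat_of_nonneg hwα).symm⟩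
  have key : ∑ r ∈ range N, (-1) ^ r * binom (I - 1) r * binom (t + r) (I - w - α + r) =
      negatedSum N (I - w - α) t := by
    rw [← shiftedSum_eq_negatedSum, shiftedSum, show I - w - α + N - 1 = I - 1 by omega]
  rcases eq_or_ne α 0 with rfl | hα₀
  · obtain rfl : w = N := by simpa using hN
    have h₁ := Q_sum₁_eq N t I 0
    have h₂ := Q_sum₂_eq N t I 0 N hN
    simp only [add_zero, sub_zero] at h₁ h₂ key
    rw [Q, if_pos rfl, h₁, h₂, Q_sum₃_eq_of_alpha_eq_zero, ← key,
      show ((N : ℤ) + 1).toNat = N + 1 by omega, sum_range_succ, Int.coe_negOnePow_natCast,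
      show I - N + N = I by ring]
    linear_combination (-(binom (I - 1) N * binom (t + N) I)) * neg_one_pow_mul_neg_one_pow_self N
  · rw [Q, if_neg hα₀, Q_sum₁_eq, Q_sum₂_eq w t I α N hN, Q_sum₃_eq w t I α N hN, ← key,
      ← sum_range_add_sum_Ico _ (show (w + 1).toNat ≤ N by omega)]
    ring

theorem Q_eq_zero (w t I α : ℤ) (hα : 0 ≤ α) (ht : 0 ≤ t) (hwα : 0 ≤ w + α) (hI : 1 ≤ I) :
    Q w t I α = 0 :=
  Q_eq_zero_general w t I α hα hwα
end

section
/- For all positive integers n and t, Σ_{i=0}^{n−1} C(t+i−1, i) − Σ_{i=⌊(n+1)/2⌋}^{n−1} C(t+2i−n−1, 2i−n) = Σ_{i=0}^{⌊(n−1)/2⌋} C(n−2−2i+t, t−1). (That is, the value at z = 1 of the h-polynomial hn_{n,t}(z) = Σ_{i=0}^{n−1} C(t+i−1,i)z^i − Σ_{i=⌊(n+1)/2⌋}^{n−1} C(t+2i−n−1,2i−n)z^i equals Σ_{i=0}^{⌊(n−1)/2⌋} C(n−2−2i+t, t−1).) -/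
open Polynomial

lemma binom_natCast_s10 (a b : ℕ) : binom (a : ℤ) (b : ℤ) = (a.choose b : ℤ) := by
  rw [binom, if_neg (by exact_mod_cast Nat.not_lt_zero b), Int.toNat_natCast,
    Ring.choose_natCast]

lemma key_partition {M : Type*} [AddCommMonoid M] (n : ℕ) (hn : 0 < n) (f : ℕ → M) :
    ∑ i ∈ Finset.range n, f i =
      (∑ i ∈ Finset.Icc ((n + 1) / 2) (n - 1), f (2 * i - n)) +
      ∑ i ∈ Finset.range ((n - 1) / 2 + 1), f (n - 1 - 2 * i) := by
  classical
  have h1 : ∑ i ∈ Finset.Icc ((n + 1) / 2) (n - 1), f (2 * i - n)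
      = ∑ j ∈ (Finset.range n).filter (fun j => j % 2 = n % 2), f j := by
    apply Finset.sum_nbij' (fun i => 2 * i - n) (fun j => (j + n) / 2)
    · intro i hi
      simp only [Finset.mem_Icc] at hi
      simp only [Finset.mem_filter, Finset.mem_range]
      omega
    · intro j hj
      simp only [Finset.mem_filter, Finset.mem_range] at hj
      simp only [Finset.mem_Icc]
      omega
    · intro i hi
      simp only [Finset.mem_Icc] at hi
      omega
    · intro j hj
      simp only [Finset.mem_filter, Finset.mem_range] at hj
      omega
    · intro i hi; rfl
  have h2 : ∑ i ∈ Finset.range ((n - 1) / 2 + 1), f (n - 1 - 2 * i)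
      = ∑ j ∈ (Finset.range n).filter (fun j => ¬ j % 2 = n % 2), f j := by
    apply Finset.sum_nbij' (fun i => n - 1 - 2 * i) (fun j => (n - 1 - j) / 2)
    · intro i hi
      simp only [Finset.mem_range] at hi
      simp only [Finset.mem_filter, Finset.mem_range]
      omega
    · intro j hj
      simp only [Finset.mem_filter, Finset.mem_range] at hj
      simp only [Finset.mem_range]
      omega
    · intro i hi
      simp only [Finset.mem_range] at hi
      omega
    · intro j hj
      simp only [Finset.mem_filter, Finset.mem_range] at hj
      omega
    · intro i hi; rfl
  rw [h1, h2, Finset.sum_filter_add_sum_filter_not]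

theorem hn_value_at_one (n t : ℕ) (hn : 0 < n) (ht : 0 < t) :
    (∑ i ∈ Finset.range n, binom ((t : ℤ) + (i : ℤ) - 1) (i : ℤ))
      - (∑ i ∈ Finset.Icc ((n + 1) / 2) (n - 1),
          binom ((t : ℤ) + 2 * (i : ℤ) - (n : ℤ) - 1) (2 * (i : ℤ) - (n : ℤ))) =
    ∑ i ∈ Finset.range ((n - 1) / 2 + 1),
      binom ((n : ℤ) - 2 - 2 * (i : ℤ) + (t : ℤ)) ((t : ℤ) - 1) := by
  set f : ℕ → ℤ := fun j => ((t - 1 + j).choose j : ℤ) with hf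
  have e1 : ∑ i ∈ Finset.range n, binom ((t : ℤ) + (i : ℤ) - 1) (i : ℤ)
      = ∑ i ∈ Finset.range n, f i := by
    apply Finset.sum_congr rfl
    intro i _
    have : (t : ℤ) + (i : ℤ) - 1 = ((t - 1 + i : ℕ) : ℤ) := by omega
    rw [this, hf, binom_natCast_s10]
  have e2 : ∑ i ∈ Finset.Icc ((n + 1) / 2) (n - 1),
        binom ((t : ℤ) + 2 * (i : ℤ) - (n : ℤ) - 1) (2 * (i : ℤ) - (n : ℤ))
      = ∑ i ∈ Finset.Icc ((n + 1) / 2) (n - 1), f (2 * i - n) := by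
    apply Finset.sum_congr rfl
    intro i hi
    simp only [Finset.mem_Icc] at hi
    have h2i : n ≤ 2 * i := by omega
    have ha : (t : ℤ) + 2 * (i : ℤ) - (n : ℤ) - 1 = ((t - 1 + (2 * i - n) : ℕ) : ℤ) := by
      push_cast; omega
    have hb : 2 * (i : ℤ) - (n : ℤ) = ((2 * i - n : ℕ) : ℤ) := by omega
    rw [ha, hb, hf, binom_natCast_s10]
  have e3 : ∑ i ∈ Finset.range ((n - 1) / 2 + 1),
        binom ((n : ℤ) - 2 - 2 * (i : ℤ) + (t : ℤ)) ((t : ℤ) - 1)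
      = ∑ i ∈ Finset.range ((n - 1) / 2 + 1), f (n - 1 - 2 * i) := by
    apply Finset.sum_congr rfl
    intro i hi
    simp only [Finset.mem_range] at hi
    have h2i : 2 * i ≤ n - 1 := by omega
    have ha : (n : ℤ) - 2 - 2 * (i : ℤ) + (t : ℤ) = ((t - 1 + (n - 1 - 2 * i) : ℕ) : ℤ) := by
      push_cast; omega
    have hb : (t : ℤ) - 1 = ((t - 1 : ℕ) : ℤ) := by omega
    rw [ha, hb, binom_natCast_s10, hf]
    have hs := Nat.choose_symm (Nat.le_add_right (t - 1) (n - 1 - 2 * i))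
    rw [Nat.add_sub_cancel_left] at hs
    rw [← hs]
  rw [e1, e2, e3, key_partition n hn f]
  ring
end
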